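/- arXiv:2511.22926 — 4 statements merged into one kernel-verified Lean document; each statement's English description precedes it below -/
import Mathlib

section
/- Let φ : Π → ℝ be a bounded measurable function and ρ, σ two probability measures on Π. Then for every η > 0, ∫ φ dρ ≤ η ( H(ρ‖σ) + log ∫ exp(η⁻¹ φ) dσ ), where H(ρ‖σ) is the relative entropy of ρ with respect to σ. -/
open MeasureTheory Real

lemma integral_llr_nonneg' {X : Type*} [MeasurableSpace X]
    (μ ν : Measure X) [IsProbabilityMeasure μ] [IsProbabilityMeasure ν]
    (hμν : μ ≪ ν) (hint : Integrable (llr μ ν) μ) :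
    0 ≤ ∫ x, llr μ ν x ∂μ := by
  have hexp : (fun x ↦ exp (- llr μ ν x)) =ᵐ[μ] fun x ↦ (ν.rnDeriv μ x).toReal :=
    exp_neg_llr hμν
  have hint2 : Integrable (fun x ↦ (ν.rnDeriv μ x).toReal) μ :=
    Measure.integrable_toReal_rnDeriv
  have h1 : ∫ x, (- llr μ ν x + 1) ∂μ ≤ ∫ x, (ν.rnDeriv μ x).toReal ∂μ := by
    refine integral_mono_ae (hint.neg.add (integrable_const 1)) hint2 ?_
    filter_upwards [hexp] with x hx
    calc - llr μ ν x + 1 ≤ exp (- llr μ ν x) := add_one_le_exp _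
    _ = (ν.rnDeriv μ x).toReal := hx
  have h2 : ∫ x, (ν.rnDeriv μ x).toReal ∂μ ≤ 1 := by
    have := Measure.setIntegral_toReal_rnDeriv_le (μ := ν) (ν := μ) (s := Set.univ)
      (by simp : ν Set.univ ≠ ⊤)
    simpa using this
  have h3 : ∫ x, (- llr μ ν x + 1) ∂μ = - ∫ x, llr μ ν x ∂μ + 1 := by
    have hn : Integrable (fun x => -llr μ ν x) μ := hint.neg
    rw [integral_add hn (integrable_const 1), integral_neg]
    simp
  linarith

/-- Gibbs' variational principle (Donsker–Varadhan inequality): for a bounded measurable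
function φ and probability measures ρ ≪ σ,
  ∫ φ dρ ≤ η ( H(ρ‖σ) + log ∫ exp(η⁻¹ φ) dσ )  for every η > 0. -/
theorem stmt_2 {X : Type*} [MeasurableSpace X]
    (ρ σ : Measure X) [IsProbabilityMeasure ρ] [IsProbabilityMeasure σ]
    (φ : X → ℝ) (hφm : Measurable φ) (C : ℝ) (hφb : ∀ x, |φ x| ≤ C)
    (η : ℝ) (hη : 0 < η)
    (hac : ρ ≪ σ)
    (hHint : Integrable (fun x => Real.log (ρ.rnDeriv σ x).toReal) ρ) :
    ∫ x, φ x ∂ρ ≤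
      η * ((∫ x, Real.log (ρ.rnDeriv σ x).toReal ∂ρ) +
        Real.log (∫ x, Real.exp (η⁻¹ * φ x) ∂σ)) := by
  set f : X → ℝ := fun x ↦ η⁻¹ * φ x with hf
  have hfm : Measurable f := hφm.const_mul _
  have hfb : ∀ x, |f x| ≤ |η⁻¹| * C := fun x ↦ by
    rw [hf, abs_mul]
    exact mul_le_mul_of_nonneg_left (hφb x) (abs_nonneg _)
  have hfρ : Integrable f ρ := by
    refine Integrable.mono' (integrable_const (|η⁻¹| * C)) hfm.aestronglyMeasurable ?_
    exact Filter.Eventually.of_forall hfb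
  have hfσ : Integrable (fun x ↦ exp (f x)) σ := by
    refine Integrable.mono' (integrable_const (exp (|η⁻¹| * C))) ?_ ?_
    · exact (hfm.exp).aestronglyMeasurable
    · refine Filter.Eventually.of_forall fun x ↦ ?_
      rw [Real.norm_eq_abs, abs_of_pos (exp_pos _)]
      exact exp_le_exp.2 ((le_abs_self _).trans (hfb x))
  have hHint' : Integrable (llr ρ σ) ρ := hHint
  have htilt : IsProbabilityMeasure (σ.tilted f) := isProbabilityMeasure_tilted hfσ
  have hac' : ρ ≪ σ.tilted f := hac.trans (absolutelyContinuous_tilted hfσ)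
  have hint' : Integrable (llr ρ (σ.tilted f)) ρ :=
    integrable_llr_tilted_right hac hfρ hHint' hfσ
  have h0 : 0 ≤ ∫ x, llr ρ (σ.tilted f) x ∂ρ :=
    integral_llr_nonneg' ρ (σ.tilted f) hac' hint'
  rw [integral_llr_tilted_right hac hfρ hfσ hHint'] at h0
  have hφf : ∫ x, φ x ∂ρ = η * ∫ x, f x ∂ρ := by
    rw [hf, integral_const_mul, ← mul_assoc, mul_inv_cancel₀ hη.ne', one_mul]
  rw [hφf]
  have : ∫ x, f x ∂ρ ≤ ∫ x, llr ρ σ x ∂ρ + log (∫ x, exp (f x) ∂σ) := by linarith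
  calc η * ∫ x, f x ∂ρ ≤ η * (∫ x, llr ρ σ x ∂ρ + log (∫ x, exp (f x) ∂σ)) :=
        mul_le_mul_of_nonneg_left this hη.le
  _ = η * ((∫ x, Real.log (ρ.rnDeriv σ x).toReal ∂ρ) + Real.log (∫ x, Real.exp (η⁻¹ * φ x) ∂σ)) := rfl
end

section
/- Let Λ, Λ̃ be bounded Markov jump kernels admitting adjoint kernels Λ*, Λ̃* with respect to a reference measure ν, and let A_Λ*, A_Λ̃* be the corresponding L¹(ν)-adjoint generators given by A_Λ*(ρ) = Λ*ρ − Λ(x,Π)ρ. Then for every ρ ∈ L¹(ν), ‖A_Λ*(ρ) − A_Λ̃*(ρ)‖_{L¹(ν)} ≤ 2 ∫_Π ‖Λ(x,·) − Λ̃(x,·)‖_TV |ρ(x)| dν(x). In particular, ‖A_Λ* − A_Λ̃*‖_{L¹(ν)→L¹(ν)} ≤ 2 ‖Λ − Λ̃‖_J. -/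
/-!
Write `A_κ* ρ - A_κ'* ρ = (η ρ - η' ρ) - (κ(·, X) - κ'(·, X)) ρ`, where `η, η'` are the adjoints.
Testing the total-variation bound against `ψ = 1` bounds the second term by `d |ρ|`. For the
first, the `L¹` norm of `g = η ρ - η' ρ` is `∫ ψ g` with `ψ = sign g`, and the adjoint relation
moves the kernels onto `ψ`: `∫ ψ · η ρ = ∫ ρ · κ ψ`. Hence `‖g‖₁ = ∫ ρ (κ ψ - κ' ψ) ≤ ∫ d |ρ|`,
and the two terms together give the factor `2`.
-/

open MeasureTheory ProbabilityTheory

section KernelAdjoint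

variable {X Y : Type*} [MeasurableSpace X] [MeasurableSpace Y] {ν : Measure X} [SFinite ν]
  {μ : Measure Y} {κ : Kernel X Y} {η : Kernel Y X}

lemma MeasureTheory.Integrable.integral_compProd_measure [IsSFiniteKernel κ]
    {f : X × Y → ℝ} (hf : Integrable f (ν ⊗ₘ κ)) :
    Integrable (fun x => ∫ y, f (x, y) ∂κ x) ν := by
  simpa using hf.integral_compProd (a := ())

lemma integrable_compProd_fst [IsFiniteKernel κ] {ρ : X → ℝ}
    (hρm : Measurable ρ) (hρ : Integrable ρ ν) :
    Integrable (fun p => ρ p.1) (ν ⊗ₘ κ) := by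
  have hm : AEStronglyMeasurable (fun p : X × Y => ρ p.1) (ν ⊗ₘ κ) :=
    (hρm.comp measurable_fst).aestronglyMeasurable
  refine (Measure.integrable_compProd_iff hm).2 ⟨.of_forall fun x => integrable_const (ρ x), ?_⟩
  have hmass : Measurable fun x => (κ x Set.univ).toReal :=
    (κ.measurable_coe MeasurableSet.univ).ennreal_toReal
  refine (hρ.norm.bdd_mul hmass.aestronglyMeasurable (c := (Kernel.bound κ).toReal)
    (.of_forall fun x => ?_)).congr (.of_forall fun x => ?_)
  · rw [Real.norm_of_nonneg ENNReal.toReal_nonneg]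
    exact ENNReal.toReal_mono (Kernel.bound_lt_top κ).ne (κ.measure_le_bound x _)
  · simp [measureReal_def]

lemma integrable_compProd_mul_of_abs_le_one [IsFiniteKernel κ]
    {ρ : X → ℝ} {ψ : Y → ℝ} (hρm : Measurable ρ) (hρ : Integrable ρ ν)
    (hψm : Measurable ψ) (hψ : ∀ y, |ψ y| ≤ 1) :
    Integrable (fun p => ρ p.1 * ψ p.2) (ν ⊗ₘ κ) :=
  (integrable_compProd_fst hρm hρ).mul_bdd (hψm.comp measurable_snd).aestronglyMeasurable
    (.of_forall fun p => hψ p.2)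

omit [SFinite ν] in
lemma integrable_swap_of_compProd_eq_map_swap (hadj : ν ⊗ₘ κ = (μ ⊗ₘ η).map Prod.swap)
    {f : X × Y → ℝ} (hf : Integrable f (ν ⊗ₘ κ)) :
    Integrable (f ∘ Prod.swap) (μ ⊗ₘ η) := by
  rw [hadj] at hf
  exact (integrable_map_measure hf.1 measurable_swap.aemeasurable).1 hf

lemma integral_integral_swap_of_compProd_eq_map_swap [SFinite μ] [IsSFiniteKernel κ]
    [IsSFiniteKernel η] (hadj : ν ⊗ₘ κ = (μ ⊗ₘ η).map Prod.swap)
    {f : X × Y → ℝ} (hf : Integrable f (ν ⊗ₘ κ)) :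
    ∫ y, ∫ x, f (x, y) ∂η y ∂μ = ∫ x, ∫ y, f (x, y) ∂κ x ∂ν :=
  calc ∫ y, ∫ x, f (x, y) ∂η y ∂μ
      = ∫ p, (f ∘ Prod.swap) p ∂(μ ⊗ₘ η) :=
        (Measure.integral_compProd (integrable_swap_of_compProd_eq_map_swap hadj hf)).symm
    _ = ∫ p, f p ∂(ν ⊗ₘ κ) := by
        rw [hadj, integral_map measurable_swap.aemeasurable (hadj ▸ hf.1)]; rfl
    _ = ∫ x, ∫ y, f (x, y) ∂κ x ∂ν := Measure.integral_compProd hf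

variable [SFinite μ] [IsFiniteKernel κ] [IsSFiniteKernel η] {ρ : X → ℝ}

lemma integrable_integral_of_compProd_eq_map_swap (hadj : ν ⊗ₘ κ = (μ ⊗ₘ η).map Prod.swap)
    (hρm : Measurable ρ) (hρ : Integrable ρ ν) :
    Integrable (fun y => ∫ x, ρ x ∂η y) μ :=
  (integrable_swap_of_compProd_eq_map_swap hadj
    (integrable_compProd_fst hρm hρ)).integral_compProd_measure

omit [SFinite μ] [IsSFiniteKernel η] in
lemma integrable_mul_integral_of_abs_le_one (hρm : Measurable ρ) (hρ : Integrable ρ ν)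
    {ψ : Y → ℝ} (hψm : Measurable ψ) (hψ : ∀ y, |ψ y| ≤ 1) :
    Integrable (fun x => ρ x * ∫ y, ψ y ∂κ x) ν := by
  simpa only [integral_const_mul] using
    (integrable_compProd_mul_of_abs_le_one (κ := κ) hρm hρ hψm hψ).integral_compProd_measure

lemma integral_mul_integral_eq_of_compProd_eq_map_swap
    (hadj : ν ⊗ₘ κ = (μ ⊗ₘ η).map Prod.swap) (hρm : Measurable ρ) (hρ : Integrable ρ ν)
    {ψ : Y → ℝ} (hψm : Measurable ψ) (hψ : ∀ y, |ψ y| ≤ 1) :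
    ∫ y, ψ y * ∫ x, ρ x ∂η y ∂μ = ∫ x, ρ x * ∫ y, ψ y ∂κ x ∂ν := by
  have h := integral_integral_swap_of_compProd_eq_map_swap hadj
    (integrable_compProd_mul_of_abs_le_one hρm hρ hψm hψ)
  simp only [integral_mul_const, integral_const_mul] at h
  simpa only [mul_comm] using h

variable {κ' : Kernel X Y} {η' : Kernel Y X} [IsFiniteKernel κ'] [IsSFiniteKernel η']

theorem integral_abs_integral_sub_integral_le (hadj : ν ⊗ₘ κ = (μ ⊗ₘ η).map Prod.swap)
    (hadj' : ν ⊗ₘ κ' = (μ ⊗ₘ η').map Prod.swap) (hρm : Measurable ρ) (hρ : Integrable ρ ν)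
    {d : X → ℝ} (hd : ∀ x, ∀ ψ : Y → ℝ, Measurable ψ → (∀ y, |ψ y| ≤ 1) →
      |(∫ y, ψ y ∂κ x) - ∫ y, ψ y ∂κ' x| ≤ d x)
    (hdρ : Integrable (fun x => d x * |ρ x|) ν) :
    ∫ y, |(∫ x, ρ x ∂η y) - ∫ x, ρ x ∂η' y| ∂μ ≤ ∫ x, d x * |ρ x| ∂ν := by
  set g : Y → ℝ := fun y => (∫ x, ρ x ∂η y) - ∫ x, ρ x ∂η' y
  have hgm : Measurable g :=
    (hρm.stronglyMeasurable.integral_kernel.sub hρm.stronglyMeasurable.integral_kernel).measurable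
  set ψ : Y → ℝ := fun y => if 0 ≤ g y then 1 else -1
  have hψm : Measurable ψ :=
    Measurable.ite (measurableSet_le measurable_const hgm) measurable_const measurable_const
  have hψ : ∀ y, |ψ y| ≤ 1 := fun y => by simp only [ψ]; split_ifs <;> simp
  have hψg : ∀ y, |g y| = ψ y * g y := fun y => by
    simp only [ψ]; split_ifs with h
    · simp [abs_of_nonneg h]
    · simp [abs_of_neg (not_le.1 h)]
  have hψη := (integrable_integral_of_compProd_eq_map_swap hadj hρm hρ).bdd_mul
    hψm.aestronglyMeasurable (.of_forall hψ)
  have hψη' := (integrable_integral_of_compProd_eq_map_swap hadj' hρm hρ).bdd_mul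
    hψm.aestronglyMeasurable (.of_forall hψ)
  have hρκ := integrable_mul_integral_of_abs_le_one (κ := κ) hρm hρ hψm hψ
  have hρκ' := integrable_mul_integral_of_abs_le_one (κ := κ') hρm hρ hψm hψ
  calc ∫ y, |g y| ∂μ
      = (∫ y, ψ y * ∫ x, ρ x ∂η y ∂μ) - ∫ y, ψ y * ∫ x, ρ x ∂η' y ∂μ := by
        simp only [hψg, g, mul_sub, integral_sub hψη hψη']
    _ = (∫ x, ρ x * ∫ y, ψ y ∂κ x ∂ν) - ∫ x, ρ x * ∫ y, ψ y ∂κ' x ∂ν := by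
        rw [integral_mul_integral_eq_of_compProd_eq_map_swap hadj hρm hρ hψm hψ,
          integral_mul_integral_eq_of_compProd_eq_map_swap hadj' hρm hρ hψm hψ]
    _ = ∫ x, ρ x * ((∫ y, ψ y ∂κ x) - ∫ y, ψ y ∂κ' x) ∂ν := by
        simp only [mul_sub, integral_sub hρκ hρκ']
    _ ≤ ∫ x, d x * |ρ x| ∂ν := by
        refine integral_mono ?_ hdρ fun x => ?_
        · simpa only [mul_sub] using (hρκ.sub hρκ' : Integrable (fun x => _ - _) ν)
        calc ρ x * ((∫ y, ψ y ∂κ x) - ∫ y, ψ y ∂κ' x)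
            ≤ |ρ x| * |(∫ y, ψ y ∂κ x) - ∫ y, ψ y ∂κ' x| := by
              rw [← abs_mul]; exact le_abs_self _
          _ ≤ |ρ x| * d x := by gcongr; exact hd x ψ hψm hψ
          _ = d x * |ρ x| := mul_comm _ _

end KernelAdjoint

section Generator

variable {X : Type*} [MeasurableSpace X]

/-- `A_κ*(ρ)`, with `η` in the role of the adjoint kernel `κ*`. -/
noncomputable def adjointJumpGenerator (κ η : Kernel X X) (ρ : X → ℝ) (x : X) : ℝ :=
  (∫ y, ρ y ∂η x) - (κ x Set.univ).toReal * ρ x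

variable {ν : Measure X} [SFinite ν] {κ κ' η η' : Kernel X X}
  [IsFiniteKernel κ] [IsFiniteKernel κ'] [IsSFiniteKernel η] [IsSFiniteKernel η'] {ρ : X → ℝ}

theorem integral_abs_adjointJumpGenerator_sub_le (hadj : ν ⊗ₘ κ = (ν ⊗ₘ η).map Prod.swap)
    (hadj' : ν ⊗ₘ κ' = (ν ⊗ₘ η').map Prod.swap) (hρm : Measurable ρ) (hρ : Integrable ρ ν)
    {d : X → ℝ} (hd : ∀ x, ∀ ψ : X → ℝ, Measurable ψ → (∀ y, |ψ y| ≤ 1) →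
      |(∫ y, ψ y ∂κ x) - ∫ y, ψ y ∂κ' x| ≤ d x)
    (hdρ : Integrable (fun x => d x * |ρ x|) ν) :
    ∫ x, |adjointJumpGenerator κ η ρ x - adjointJumpGenerator κ' η' ρ x| ∂ν
      ≤ 2 * ∫ x, d x * |ρ x| ∂ν := by
  have hmass : ∀ x, |(κ x Set.univ).toReal - (κ' x Set.univ).toReal| ≤ d x := fun x => by
    simpa [measureReal_def] using hd x 1 measurable_const (by simp)
  have hη := integrable_integral_of_compProd_eq_map_swap hadj hρm hρ
  have hη' := integrable_integral_of_compProd_eq_map_swap hadj' hρm hρ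
  have hpointwise : ∀ x, |adjointJumpGenerator κ η ρ x - adjointJumpGenerator κ' η' ρ x|
      ≤ |(∫ y, ρ y ∂η x) - ∫ y, ρ y ∂η' x| + d x * |ρ x| := fun x => by
    calc |adjointJumpGenerator κ η ρ x - adjointJumpGenerator κ' η' ρ x|
        = |((∫ y, ρ y ∂η x) - ∫ y, ρ y ∂η' x)
            - ((κ x Set.univ).toReal - (κ' x Set.univ).toReal) * ρ x| := by
          unfold adjointJumpGenerator; congr 1; ring
      _ ≤ |(∫ y, ρ y ∂η x) - ∫ y, ρ y ∂η' x|
            + |(κ x Set.univ).toReal - (κ' x Set.univ).toReal| * |ρ x| := by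
          rw [← abs_mul]; exact abs_sub _ _
      _ ≤ _ := by gcongr; exact hmass x
  calc ∫ x, |adjointJumpGenerator κ η ρ x - adjointJumpGenerator κ' η' ρ x| ∂ν
      ≤ ∫ x, |(∫ y, ρ y ∂η x) - ∫ y, ρ y ∂η' x| + d x * |ρ x| ∂ν :=
        integral_mono_of_nonneg (.of_forall fun _ => abs_nonneg _)
          ((hη.sub hη').abs.add hdρ) (.of_forall hpointwise)
    _ = (∫ x, |(∫ y, ρ y ∂η x) - ∫ y, ρ y ∂η' x| ∂ν) + ∫ x, d x * |ρ x| ∂ν :=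
        integral_add (hη.sub hη').abs hdρ
    _ ≤ 2 * ∫ x, d x * |ρ x| ∂ν := by
        linarith [integral_abs_integral_sub_integral_le hadj hadj' hρm hρ hd hdρ]

end Generator

theorem stmt_5_general {X : Type*} [MeasurableSpace X] (ν : Measure X) [IsFiniteMeasure ν]
    (Λ Λt Λs Λts : Kernel X X)
    [IsFiniteKernel Λ] [IsFiniteKernel Λt] [IsFiniteKernel Λs] [IsFiniteKernel Λts]
    (hadj : ν.compProd Λ = (ν.compProd Λs).map Prod.swap)
    (hadjt : ν.compProd Λt = (ν.compProd Λts).map Prod.swap)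
    (ρ : X → ℝ) (hρm : Measurable ρ) (hρi : Integrable ρ ν)
    (d : X → ℝ)
    (hd : ∀ x, ∀ ψ : X → ℝ, Measurable ψ → (∀ y, |ψ y| ≤ 1) →
      |(∫ y, ψ y ∂(Λ x)) - (∫ y, ψ y ∂(Λt x))| ≤ d x)
    (hdi : Integrable (fun x => d x * |ρ x|) ν) :
    (∫ x, |((∫ y, ρ y ∂(Λs x)) - (Λ x Set.univ).toReal * ρ x) -
        ((∫ y, ρ y ∂(Λts x)) - (Λt x Set.univ).toReal * ρ x)| ∂ν)
      ≤ 2 * ∫ x, d x * |ρ x| ∂ν ∧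
    (∀ Dc : ℝ, (∀ x, d x ≤ Dc) →
      (∫ x, |((∫ y, ρ y ∂(Λs x)) - (Λ x Set.univ).toReal * ρ x) -
          ((∫ y, ρ y ∂(Λts x)) - (Λt x Set.univ).toReal * ρ x)| ∂ν)
        ≤ 2 * Dc * ∫ x, |ρ x| ∂ν) := by
  have h := integral_abs_adjointJumpGenerator_sub_le hadj hadjt hρm hρi hd hdi
  refine ⟨h, fun Dc hDc => h.trans ?_⟩
  rw [mul_assoc, ← integral_const_mul Dc]
  gcongr 2 * ?_
  exact integral_mono hdi (hρi.abs.const_mul Dc) fun x => by gcongr; exact hDc x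

/-- Stability of the adjoint jump generator A_Λ*(ρ) = Λ*ρ − Λ(x,Π)ρ with respect to the
kernel, in L¹(ν):
‖A_Λ*(ρ) − A_Λ̃*(ρ)‖_{L¹(ν)} ≤ 2 ∫ ‖Λ(x,·) − Λ̃(x,·)‖_TV |ρ(x)| dν(x), and consequently
the operator-norm bound 2‖Λ − Λ̃‖_J.  The adjoint relation Λ(x,dy)ν(dx) = Λ*(y,dx)ν(dy)
is expressed as equality of the two measures on X × X, and the total variation norm of
Λ(x,·) − Λ̃(x,·) through its dual characterization (an upper bound d x). -/
theorem stmt_5 {X : Type*} [MeasurableSpace X] (ν : Measure X) [IsFiniteMeasure ν]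
    (Λ Λt Λs Λts : Kernel X X)
    [IsFiniteKernel Λ] [IsFiniteKernel Λt] [IsFiniteKernel Λs] [IsFiniteKernel Λts]
    (hΛ0 : ∀ x, Λ x {x} = 0) (hΛt0 : ∀ x, Λt x {x} = 0)
    (hadj : ν.compProd Λ = (ν.compProd Λs).map Prod.swap)
    (hadjt : ν.compProd Λt = (ν.compProd Λts).map Prod.swap)
    (ρ : X → ℝ) (hρm : Measurable ρ) (hρi : Integrable ρ ν)
    (hρint : ∀ᵐ x ∂ν, Integrable ρ (Λs x)) (hρint' : ∀ᵐ x ∂ν, Integrable ρ (Λts x))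
    (d : X → ℝ) (hdm : Measurable d)
    (hd : ∀ x, ∀ ψ : X → ℝ, Measurable ψ → (∀ y, |ψ y| ≤ 1) →
      |(∫ y, ψ y ∂(Λ x)) - (∫ y, ψ y ∂(Λt x))| ≤ d x)
    (hdi : Integrable (fun x => d x * |ρ x|) ν) :
    (∫ x, |((∫ y, ρ y ∂(Λs x)) - (Λ x Set.univ).toReal * ρ x) -
        ((∫ y, ρ y ∂(Λts x)) - (Λt x Set.univ).toReal * ρ x)| ∂ν)
      ≤ 2 * ∫ x, d x * |ρ x| ∂ν ∧
    (∀ Dc : ℝ, (∀ x, d x ≤ Dc) →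
      (∫ x, |((∫ y, ρ y ∂(Λs x)) - (Λ x Set.univ).toReal * ρ x) -
          ((∫ y, ρ y ∂(Λts x)) - (Λt x Set.univ).toReal * ρ x)| ∂ν)
        ≤ 2 * Dc * ∫ x, |ρ x| ∂ν) :=
  stmt_5_general ν Λ Λt Λs Λts hadj hadjt ρ hρm hρi d hd hdi
end

section
/- Let Υ : P(Π) → J be a map from probability measures into a normed space satisfying the second-order bounded displacement condition: there exists Θ′ ≥ 0 such that for all μ₀, μ₁ ∈ P(Π) and t ∈ [0,1], with μ_t = (1−t)μ₀ + tμ₁, ‖Υ(μ_t) − (1−t)Υ(μ₀) − tΥ(μ₁)‖ ≤ (Θ′/2) t(1−t) ‖μ₀ − μ₁‖²_TV. Then for empirical measures of N−1 points (N ≥ 3) of the form μ = σ + a(δ_{x₁} + δ_{x₂}), μ^{(1)} = σ + a(δ_{x₁′} + δ_{x₂}), μ^{(2)} = σ + a(δ_{x₁} + δ_{x₂′}), μ^{(1,2)} = σ + a(δ_{x₁′} + δ_{x₂′}) with a = 1/(N−1), one has ‖Υ(μ) − Υ(μ^{(1)}) − Υ(μ^{(2)}) + Υ(μ^{(1,2)})‖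 ≤ 8Θ′/(N−1)² ≤ 8Θ′/((N−1)(N−2)). -/
open MeasureTheory ENNReal

/-- The total variation distance between two finite measures, via
‖μ − ν‖_TV = 2 sup_{E measurable} |μ(E) − ν(E)| (valid for measures of equal mass). -/
noncomputable def tvDist {X : Type*} [MeasurableSpace X] (μ ν : Measure X) : ℝ :=
  2 * ⨆ E : {E : Set X // MeasurableSet E}, |(μ E.1).toReal - (ν E.1).toReal|

lemma tvDist_nonneg {X : Type*} [MeasurableSpace X] (μ ν : Measure X) : 0 ≤ tvDist μ ν := by
  unfold tvDist
  have : (0:ℝ) ≤ ⨆ E : {E : Set X // MeasurableSet E}, |(μ E.1).toReal - (ν E.1).toReal| :=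
    Real.iSup_nonneg fun E => abs_nonneg _
  linarith

lemma tv_aux {X : Type*} [MeasurableSpace X] (σ : Measure X) (hσ : σ Set.univ ≠ ⊤)
    (a : ℝ≥0∞) (ha : a ≠ ⊤) (y z y' z' : X) :
    tvDist (a • (σ + (Measure.dirac y + Measure.dirac z)))
      (a • (σ + (Measure.dirac y' + Measure.dirac z'))) ≤ 2 * (2 * a.toReal) := by
  unfold tvDist
  have h2 : (0:ℝ) ≤ 2 := by norm_num
  refine mul_le_mul_of_nonneg_left (ciSup_le fun E => ?_) h2
  have hσfin : a * σ E.1 ≠ ⊤ := by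
    refine ENNReal.mul_ne_top ha (ne_top_of_le_ne_top hσ (measure_mono (Set.subset_univ _)))
  have hdfin : ∀ w : X, a * Measure.dirac w E.1 ≠ ⊤ := fun w =>
    ENNReal.mul_ne_top ha (ne_top_of_le_ne_top ENNReal.one_ne_top prob_le_one)
  have hdle : ∀ w : X, (a * Measure.dirac w E.1).toReal ≤ a.toReal := by
    intro w
    refine ENNReal.toReal_mono ha ?_
    calc a * Measure.dirac w E.1 ≤ a * 1 := mul_le_mul_right prob_le_one a
    _ = a := mul_one a
  have hd0 : ∀ w : X, 0 ≤ (a * Measure.dirac w E.1).toReal := fun w => ENNReal.toReal_nonneg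
  have hcomp : ∀ w w' : X,
      ((a • (σ + (Measure.dirac w + Measure.dirac w'))) E.1).toReal
        = (a * σ E.1).toReal + ((a * Measure.dirac w E.1).toReal
            + (a * Measure.dirac w' E.1).toReal) := by
    intro w w'
    rw [Measure.smul_apply, smul_eq_mul, Measure.add_apply, Measure.add_apply, mul_add, mul_add,
      ENNReal.toReal_add hσfin (ENNReal.add_ne_top.2 ⟨hdfin w, hdfin w'⟩),
      ENNReal.toReal_add (hdfin w) (hdfin w')]
  rw [hcomp y z, hcomp y' z', abs_le]
  constructor
  · have := hdle y'; have := hdle z'; have := hd0 y; have := hd0 z; linarith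
  · have := hdle y; have := hdle z; have := hd0 y'; have := hd0 z'; linarith

lemma prob_aux {X : Type*} [MeasurableSpace X] (σ : Measure X) (c : ℝ≥0∞)
    (hσ : σ Set.univ + 2 = c) (hc0 : c ≠ 0) (hct : c ≠ ⊤) (y z : X) :
    IsProbabilityMeasure (c⁻¹ • (σ + (Measure.dirac y + Measure.dirac z))) := by
  constructor
  rw [Measure.smul_apply, smul_eq_mul, Measure.add_apply, Measure.add_apply,
    Measure.dirac_apply_of_mem (Set.mem_univ y), Measure.dirac_apply_of_mem (Set.mem_univ z)]
  have : σ Set.univ + (1 + 1) = c := by rw [← hσ]; ring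
  rw [this]
  exact ENNReal.inv_mul_cancel hc0 hct

/-- Second-order bounded difference from the second-order bounded displacement condition:
if ‖Υ(μ_t) − (1−t)Υ(μ₀) − tΥ(μ₁)‖ ≤ (Θ′/2) t(1−t) ‖μ₀−μ₁‖²_TV on probability measures,
then for empirical measures of N−1 points differing in two atoms,
‖Υ(μ) − Υ(μ⁽¹⁾) − Υ(μ⁽²⁾) + Υ(μ⁽¹²⁾)‖ ≤ 8Θ′/(N−1)² ≤ 8Θ′/((N−1)(N−2)). -/
theorem stmt_8 {X J : Type*} [MeasurableSpace X]
    [NormedAddCommGroup J] [NormedSpace ℝ J]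
    (Υ : Measure X → J) (Θ' : ℝ) (hΘ' : 0 ≤ Θ')
    (hDisp : ∀ μ₀ μ₁ : Measure X, IsProbabilityMeasure μ₀ → IsProbabilityMeasure μ₁ →
      ∀ t ∈ Set.Icc (0:ℝ) 1,
        ‖Υ (ENNReal.ofReal (1 - t) • μ₀ + ENNReal.ofReal t • μ₁) -
            ((1 - t) • Υ μ₀ + t • Υ μ₁)‖
          ≤ Θ' / 2 * (t * (1 - t)) * (tvDist μ₀ μ₁) ^ 2)
    (N : ℕ) (hN : 3 ≤ N)
    (p : Fin (N - 3) → X) (x₁ x₂ x₁' x₂' : X) :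
    ‖Υ (((N : ENNReal) - 1)⁻¹ •
          ((∑ k, Measure.dirac (p k)) + (Measure.dirac x₁ + Measure.dirac x₂))) -
        Υ (((N : ENNReal) - 1)⁻¹ •
          ((∑ k, Measure.dirac (p k)) + (Measure.dirac x₁' + Measure.dirac x₂))) -
        Υ (((N : ENNReal) - 1)⁻¹ •
          ((∑ k, Measure.dirac (p k)) + (Measure.dirac x₁ + Measure.dirac x₂'))) +
        Υ (((N : ENNReal) - 1)⁻¹ •
          ((∑ k, Measure.dirac (p k)) + (Measure.dirac x₁' + Measure.dirac x₂')))‖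
      ≤ 8 * Θ' / ((N : ℝ) - 1) ^ 2 ∧
    8 * Θ' / ((N : ℝ) - 1) ^ 2 ≤ 8 * Θ' / (((N : ℝ) - 1) * ((N : ℝ) - 2)) := by
  obtain ⟨m, rfl⟩ : ∃ m, N = m + 3 := ⟨N - 3, by omega⟩
  clear hN
  set S : Measure X := ∑ k, Measure.dirac (p k) with hS
  have hSuniv : S Set.univ = (m : ℝ≥0∞) := by
    rw [hS, Measure.finset_sum_apply]
    simp
  set c : ℝ≥0∞ := ((m + 3 : ℕ) : ℝ≥0∞) - 1 with hcdef
  have hc : c = (m : ℝ≥0∞) + 2 := by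
    rw [hcdef]
    push_cast
    rw [show ((m : ℝ≥0∞) + 3) = ((m : ℝ≥0∞) + 2) + 1 by ring,
      ENNReal.add_sub_cancel_right ENNReal.one_ne_top]
  have hc0 : c ≠ 0 := by rw [hc]; simp
  have hct : c ≠ ⊤ := by
    rw [hc]
    exact ENNReal.add_ne_top.2 ⟨ENNReal.natCast_ne_top m, ENNReal.ofNat_ne_top⟩
  have ha : c⁻¹ ≠ ⊤ := ENNReal.inv_ne_top.2 hc0
  have hSt : S Set.univ ≠ ⊤ := by rw [hSuniv]; exact ENNReal.natCast_ne_top m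
  set r : ℝ := (c⁻¹).toReal with hrdef
  have hr : r = ((m : ℝ) + 2)⁻¹ := by
    rw [hrdef, ENNReal.toReal_inv, hc,
      ENNReal.toReal_add (ENNReal.natCast_ne_top m) ENNReal.ofNat_ne_top,
      ENNReal.toReal_natCast, ENNReal.toReal_ofNat]
  have hr0 : 0 ≤ r := by rw [hr]; positivity
  have hP : ∀ y z : X, IsProbabilityMeasure (c⁻¹ • (S + (Measure.dirac y + Measure.dirac z))) :=
    fun y z => prob_aux S c (by rw [hSuniv, hc]) hc0 hct y z
  set μ := c⁻¹ • (S + (Measure.dirac x₁ + Measure.dirac x₂)) with hμ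
  set μ₁ := c⁻¹ • (S + (Measure.dirac x₁' + Measure.dirac x₂)) with hμ₁
  set μ₂ := c⁻¹ • (S + (Measure.dirac x₁ + Measure.dirac x₂')) with hμ₂
  set μ₁₂ := c⁻¹ • (S + (Measure.dirac x₁' + Measure.dirac x₂')) with hμ₁₂
  have hd1 : tvDist μ μ₁₂ ≤ 2 * (2 * r) := tv_aux S hSt c⁻¹ ha x₁ x₂ x₁' x₂'
  have hd2 : tvDist μ₁ μ₂ ≤ 2 * (2 * r) := tv_aux S hSt c⁻¹ ha x₁' x₂ x₁ x₂'
  have hd1' : 0 ≤ tvDist μ μ₁₂ := tvDist_nonneg μ μ₁₂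
  have hd2' : 0 ≤ tvDist μ₁ μ₂ := tvDist_nonneg μ₁ μ₂
  have h1 := hDisp μ μ₁₂ (hP x₁ x₂) (hP x₁' x₂') (1/2) (by norm_num)
  have h2 := hDisp μ₁ μ₂ (hP x₁' x₂) (hP x₁ x₂') (1/2) (by norm_num)
  have h12 : (1:ℝ) - 1/2 = 1/2 := by norm_num
  rw [h12] at h1 h2
  have hmid : ENNReal.ofReal (1/2) • μ₁ + ENNReal.ofReal (1/2) • μ₂
      = ENNReal.ofReal (1/2) • μ + ENNReal.ofReal (1/2) • μ₁₂ := by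
    rw [hμ, hμ₁, hμ₂, hμ₁₂]
    simp only [smul_add]
    abel
  rw [hmid] at h2
  set mid := ENNReal.ofReal (1/2) • μ + ENNReal.ofReal (1/2) • μ₁₂ with hmd
  have key : Υ μ - Υ μ₁ - Υ μ₂ + Υ μ₁₂
      = (2:ℝ) • ((Υ mid - ((1/2 : ℝ) • Υ μ₁ + (1/2 : ℝ) • Υ μ₂))
          - (Υ mid - ((1/2 : ℝ) • Υ μ + (1/2 : ℝ) • Υ μ₁₂))) := by
    module
  have hnorm : ‖Υ μ - Υ μ₁ - Υ μ₂ + Υ μ₁₂‖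
      ≤ 2 * (‖Υ mid - ((1/2 : ℝ) • Υ μ₁ + (1/2 : ℝ) • Υ μ₂)‖
          + ‖Υ mid - ((1/2 : ℝ) • Υ μ + (1/2 : ℝ) • Υ μ₁₂)‖) := by
    rw [key, norm_smul]
    simp only [Real.norm_ofNat]
    have := norm_sub_le (Υ mid - ((1/2 : ℝ) • Υ μ₁ + (1/2 : ℝ) • Υ μ₂))
      (Υ mid - ((1/2 : ℝ) • Υ μ + (1/2 : ℝ) • Υ μ₁₂))
    nlinarith [norm_nonneg (Υ mid - ((1/2 : ℝ) • Υ μ₁ + (1/2 : ℝ) • Υ μ₂))]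
  have hsq1 : tvDist μ μ₁₂ ^ 2 ≤ (2 * (2 * r)) ^ 2 := by nlinarith
  have hsq2 : tvDist μ₁ μ₂ ^ 2 ≤ (2 * (2 * r)) ^ 2 := by nlinarith
  have hb1 : ‖Υ mid - ((1/2 : ℝ) • Υ μ + (1/2 : ℝ) • Υ μ₁₂)‖ ≤ Θ' / 8 * (4 * r) ^ 2 := by
    calc _ ≤ Θ' / 2 * (1/2 * (1/2)) * tvDist μ μ₁₂ ^ 2 := h1
    _ ≤ Θ' / 2 * (1/2 * (1/2)) * (2 * (2 * r)) ^ 2 := by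
        refine mul_le_mul_of_nonneg_left hsq1 (by positivity)
    _ = Θ' / 8 * (4 * r) ^ 2 := by ring
  have hb2 : ‖Υ mid - ((1/2 : ℝ) • Υ μ₁ + (1/2 : ℝ) • Υ μ₂)‖ ≤ Θ' / 8 * (4 * r) ^ 2 := by
    calc _ ≤ Θ' / 2 * (1/2 * (1/2)) * tvDist μ₁ μ₂ ^ 2 := h2
    _ ≤ Θ' / 2 * (1/2 * (1/2)) * (2 * (2 * r)) ^ 2 := by
        refine mul_le_mul_of_nonneg_left hsq2 (by positivity)
    _ = Θ' / 8 * (4 * r) ^ 2 := by ring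
  have hcast : ((m + 3 : ℕ) : ℝ) - 1 = (m : ℝ) + 2 := by push_cast; ring
  have hcast2 : ((m + 3 : ℕ) : ℝ) - 2 = (m : ℝ) + 1 := by push_cast; ring
  have hgoal1 : 8 * Θ' / (((m + 3 : ℕ) : ℝ) - 1) ^ 2 = 8 * Θ' * r ^ 2 := by
    rw [hcast, hr, div_eq_mul_inv, ← inv_pow]
  constructor
  · calc ‖Υ μ - Υ μ₁ - Υ μ₂ + Υ μ₁₂‖
        ≤ 2 * (‖Υ mid - ((1/2 : ℝ) • Υ μ₁ + (1/2 : ℝ) • Υ μ₂)‖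
          + ‖Υ mid - ((1/2 : ℝ) • Υ μ + (1/2 : ℝ) • Υ μ₁₂)‖) := hnorm
    _ ≤ 2 * (Θ' / 8 * (4 * r) ^ 2 + Θ' / 8 * (4 * r) ^ 2) := by linarith
    _ = 8 * Θ' * r ^ 2 := by ring
    _ = 8 * Θ' / (((m + 3 : ℕ) : ℝ) - 1) ^ 2 := hgoal1.symm
  · rw [hcast, hcast2]
    have hm : (0:ℝ) ≤ (m:ℝ) := Nat.cast_nonneg m
    rw [div_le_div_iff₀ (by positivity) (by positivity)]
    nlinarith
end

section
/- Let K* be an adjoint Markov generator on L¹(ν) and {A_t*}_{t∈[0,T]} a continuous curve of bounded adjoint Markov generators. Suppose ρ, σ ∈ C¹([0,T]; L¹(ν)) satisfy ρ₀ ≥ σ₀ and, classically, ∂_t ρ_t ≥ K*ρ_t + A_t*(ρ_t) and ∂_t σ_t ≤ K*σ_t + A_t*(σ_t) for t ∈ (0,T). Then ρ_t ≥ σ_t for all t ∈ [0,T]. -/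
open MeasureTheory Filter Topology

/-- Comparison principle: if K* is an adjoint Markov generator (mass conserving and
satisfying the positive maximum principle), {A_t*} is a continuous curve of bounded
adjoint Markov generators, and ρ, σ are C¹ curves in L¹(ν) with ρ₀ ≥ σ₀ satisfying
∂_tρ_t ≥ K*ρ_t + A_t*(ρ_t) and ∂_tσ_t ≤ K*σ_t + A_t*(σ_t) classically on (0,T),
then ρ_t ≥ σ_t for all t ∈ [0,T].  Time derivatives are taken in the L¹(ν)-sense. -/
theorem stmt_10 {X : Type*} [MeasurableSpace X] (ν : Measure X) [IsFiniteMeasure ν]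
    (T : ℝ) (hT : 0 < T)
    (K : (X → ℝ) → (X → ℝ)) (A : ℝ → (X → ℝ) → (X → ℝ))
    (hKadd : ∀ f g : X → ℝ, K (f + g) = K f + K g)
    (hKsmul : ∀ (c : ℝ) (f : X → ℝ), K (c • f) = c • K f)
    (hKmass : ∀ f : X → ℝ, Integrable f ν → Integrable (K f) ν ∧ ∫ x, K f x ∂ν = 0)
    (hKmax : ∀ f : X → ℝ, Integrable f ν → ∫ x in {x | 0 < f x}, K f x ∂ν ≤ 0)
    (hAadd : ∀ t : ℝ, ∀ f g : X → ℝ, A t (f + g) = A t f + A t g)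
    (hAsmul : ∀ t : ℝ, ∀ (c : ℝ) (f : X → ℝ), A t (c • f) = c • A t f)
    (hAmass : ∀ t ∈ Set.Icc (0:ℝ) T, ∀ f : X → ℝ, Integrable f ν →
      Integrable (A t f) ν ∧ ∫ x, A t f x ∂ν = 0)
    (hAmax : ∀ t ∈ Set.Icc (0:ℝ) T, ∀ f : X → ℝ, Integrable f ν →
      ∫ x in {x | 0 < f x}, A t f x ∂ν ≤ 0)
    (hAbdd : ∃ MA : ℝ, ∀ t ∈ Set.Icc (0:ℝ) T, ∀ f : X → ℝ, Integrable f ν →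
      ∫ x, |A t f x| ∂ν ≤ MA * ∫ x, |f x| ∂ν)
    (ρ σ ρ' σ' : ℝ → X → ℝ)
    (hρi : ∀ t ∈ Set.Icc (0:ℝ) T, Integrable (ρ t) ν)
    (hσi : ∀ t ∈ Set.Icc (0:ℝ) T, Integrable (σ t) ν)
    (hρ'i : ∀ t ∈ Set.Icc (0:ℝ) T, Integrable (ρ' t) ν)
    (hσ'i : ∀ t ∈ Set.Icc (0:ℝ) T, Integrable (σ' t) ν)
    -- ρ and σ are C¹ as curves in L¹(ν), with derivatives ρ' and σ':
    (hρd : ∀ t ∈ Set.Icc (0:ℝ) T,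
      Tendsto (fun h : ℝ => (∫ x, |ρ (t + h) x - ρ t x - h * ρ' t x| ∂ν) / |h|)
        (𝓝[≠] (0:ℝ)) (𝓝 0))
    (hσd : ∀ t ∈ Set.Icc (0:ℝ) T,
      Tendsto (fun h : ℝ => (∫ x, |σ (t + h) x - σ t x - h * σ' t x| ∂ν) / |h|)
        (𝓝[≠] (0:ℝ)) (𝓝 0))
    (hρ'c : ∀ t₀ ∈ Set.Icc (0:ℝ) T,
      Tendsto (fun t => ∫ x, |ρ' t x - ρ' t₀ x| ∂ν) (𝓝[Set.Icc (0:ℝ) T] t₀) (𝓝 0))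
    (hσ'c : ∀ t₀ ∈ Set.Icc (0:ℝ) T,
      Tendsto (fun t => ∫ x, |σ' t x - σ' t₀ x| ∂ν) (𝓝[Set.Icc (0:ℝ) T] t₀) (𝓝 0))
    -- initial ordering and the differential inequalities on (0,T):
    (hinit : ∀ᵐ x ∂ν, σ 0 x ≤ ρ 0 x)
    (hρineq : ∀ t ∈ Set.Ioo (0:ℝ) T, ∀ᵐ x ∂ν, K (ρ t) x + A t (ρ t) x ≤ ρ' t x)
    (hσineq : ∀ t ∈ Set.Ioo (0:ℝ) T, ∀ᵐ x ∂ν, σ' t x ≤ K (σ t) x + A t (σ t) x) :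
    ∀ t ∈ Set.Icc (0:ℝ) T, ∀ᵐ x ∂ν, σ t x ≤ ρ t x := by
  classical
  set F : ℝ → ℝ := fun t => ∫ x, max (σ t x - ρ t x) 0 ∂ν with hFdef
  have hwi : ∀ t ∈ Set.Icc (0:ℝ) T, Integrable (fun x => σ t x - ρ t x) ν :=
    fun t ht => (hσi t ht).sub (hρi t ht)
  have hmi : ∀ t ∈ Set.Icc (0:ℝ) T, Integrable (fun x => max (σ t x - ρ t x) 0) ν :=
    fun t ht => (hwi t ht).pos_part
  have hFnonneg : ∀ t, 0 ≤ F t := fun t => integral_nonneg fun x => le_max_right _ _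
  have hF0 : F 0 = 0 := by
    have h : (fun x => max (σ 0 x - ρ 0 x) 0) =ᵐ[ν] (fun _ => (0:ℝ)) :=
      hinit.mono fun x hx => max_eq_right (by linarith)
    simp only [hFdef]
    rw [integral_congr_ae h, integral_zero]
  -- L¹ continuity of the curves
  have key : ∀ f f' : ℝ → X → ℝ,
      (∀ t ∈ Set.Icc (0:ℝ) T, Integrable (f t) ν) →
      (∀ t ∈ Set.Icc (0:ℝ) T, Integrable (f' t) ν) →
      (∀ t ∈ Set.Icc (0:ℝ) T,
        Tendsto (fun h : ℝ => (∫ x, |f (t + h) x - f t x - h * f' t x| ∂ν) / |h|)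
          (𝓝[≠] (0:ℝ)) (𝓝 0)) →
      ∀ t ∈ Set.Icc (0:ℝ) T,
        Tendsto (fun u => ∫ x, |f u x - f t x| ∂ν)
          (𝓝[Set.Icc (0:ℝ) T \ {t}] t) (𝓝 0) := by
    intro f f' hfi hf'i hfd t ht
    set L := 𝓝[Set.Icc (0:ℝ) T \ {t}] t with hL
    have hmap : Tendsto (fun u : ℝ => u - t) L (𝓝[≠] (0:ℝ)) := by
      rw [tendsto_nhdsWithin_iff]
      constructor
      · have : Tendsto (fun u : ℝ => u - t) (𝓝 t) (𝓝 (t - t)) :=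
          tendsto_id.sub tendsto_const_nhds
        rw [sub_self] at this
        exact this.mono_left nhdsWithin_le_nhds
      · filter_upwards [self_mem_nhdsWithin] with u hu
        exact sub_ne_zero.2 hu.2
    have hdist : Tendsto (fun u : ℝ => |u - t|) L (𝓝 0) := by
      have : Tendsto (fun u : ℝ => |u - t|) (𝓝 t) (𝓝 |t - t|) :=
        ((continuous_id.sub continuous_const).abs).continuousAt
      rw [sub_self, abs_zero] at this
      exact this.mono_left nhdsWithin_le_nhds
    have hE : Tendsto (fun u => ∫ x, |f u x - f t x - (u - t) * f' t x| ∂ν) L (𝓝 0) := by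
      have h1 := ((hfd t ht).comp hmap).mul hdist
      rw [zero_mul] at h1
      apply h1.congr'
      filter_upwards [self_mem_nhdsWithin] with u hu
      have hne : |u - t| ≠ 0 := abs_ne_zero.2 (sub_ne_zero.2 hu.2)
      have h2 : t + (u - t) = u := by ring
      simp only [Function.comp, h2]
      rw [div_mul_cancel₀ _ hne]
    have hsum : Tendsto
        (fun u => (∫ x, |f u x - f t x - (u - t) * f' t x| ∂ν) + |u - t| * ∫ x, |f' t x| ∂ν)
        L (𝓝 0) := by
      have := hE.add (hdist.mul_const (∫ x, |f' t x| ∂ν))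
      rwa [zero_add, zero_mul] at this
    apply squeeze_zero'
    · filter_upwards with u
      exact integral_nonneg fun x => abs_nonneg _
    · filter_upwards [self_mem_nhdsWithin] with u hu
      have hui : Integrable (f u) ν := hfi u hu.1
      have hti : Integrable (f t) ν := hfi t ht
      have h'i : Integrable (f' t) ν := hf'i t ht
      have hint1 : Integrable (fun x => |f u x - f t x - (u - t) * f' t x|) ν :=
        ((hui.sub hti).sub (h'i.const_mul (u - t))).abs
      have hint2 : Integrable (fun x => |u - t| * |f' t x|) ν := (h'i.abs).const_mul _
      have hintL : Integrable (fun x => |f u x - f t x|) ν := (hui.sub hti).abs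
      have hintR : Integrable
          (fun x => |f u x - f t x - (u - t) * f' t x| + |u - t| * |f' t x|) ν :=
        hint1.add hint2
      calc ∫ x, |f u x - f t x| ∂ν
          ≤ ∫ x, (|f u x - f t x - (u - t) * f' t x| + |u - t| * |f' t x|) ∂ν := by
            apply integral_mono hintL hintR
            intro x
            have heq : f u x - f t x
                = (f u x - f t x - (u - t) * f' t x) + (u - t) * f' t x := by ring
            show |f u x - f t x| ≤ _
            rw [heq]
            refine (abs_add_le _ _).trans ?_
            rw [abs_mul]
        _ = (∫ x, |f u x - f t x - (u - t) * f' t x| ∂ν) + |u - t| * ∫ x, |f' t x| ∂ν := by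
            rw [integral_add hint1 hint2, integral_const_mul]
    · exact hsum
  have hρL1 := key ρ ρ' hρi hρ'i hρd
  have hσL1 := key σ σ' hσi hσ'i hσd
  -- continuity of F on [0, T]
  have hFcont : ContinuousOn F (Set.Icc (0:ℝ) T) := by
    intro t ht
    rw [← continuousWithinAt_diff_self]
    have hg0 : Tendsto (fun u => (∫ x, |ρ u x - ρ t x| ∂ν) + ∫ x, |σ u x - σ t x| ∂ν)
        (𝓝[Set.Icc (0:ℝ) T \ {t}] t) (𝓝 0) := by
      simpa using (hρL1 t ht).add (hσL1 t ht)
    have hFt : Tendsto (fun u => F u - F t) (𝓝[Set.Icc (0:ℝ) T \ {t}] t) (𝓝 0) := by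
      refine squeeze_zero_norm' ?_ hg0
      filter_upwards [self_mem_nhdsWithin] with u hu
      have hmu := hmi u hu.1
      have hmt := hmi t ht
      have hintL : Integrable (fun x => |max (σ u x - ρ u x) 0 - max (σ t x - ρ t x) 0|) ν :=
        (hmu.sub hmt).abs
      have hint1 : Integrable (fun x => |ρ u x - ρ t x|) ν := ((hρi u hu.1).sub (hρi t ht)).abs
      have hint2 : Integrable (fun x => |σ u x - σ t x|) ν := ((hσi u hu.1).sub (hσi t ht)).abs
      have hintR : Integrable (fun x => |ρ u x - ρ t x| + |σ u x - σ t x|) ν := hint1.add hint2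
      have h1 : F u - F t = ∫ x, (max (σ u x - ρ u x) 0 - max (σ t x - ρ t x) 0) ∂ν := by
        rw [integral_sub hmu hmt]
      rw [Real.norm_eq_abs, h1]
      calc |∫ x, (max (σ u x - ρ u x) 0 - max (σ t x - ρ t x) 0) ∂ν|
          ≤ ∫ x, |max (σ u x - ρ u x) 0 - max (σ t x - ρ t x) 0| ∂ν := by
            simpa [Real.norm_eq_abs] using
              norm_integral_le_integral_norm (μ := ν)
                (fun x => max (σ u x - ρ u x) 0 - max (σ t x - ρ t x) 0)
        _ ≤ ∫ x, (|ρ u x - ρ t x| + |σ u x - σ t x|) ∂ν := by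
            apply integral_mono hintL hintR
            intro x
            show |max (σ u x - ρ u x) 0 - max (σ t x - ρ t x) 0| ≤ _
            refine (abs_max_sub_max_le_abs _ _ _).trans ?_
            have heq : σ u x - ρ u x - (σ t x - ρ t x)
                = -(ρ u x - ρ t x) + (σ u x - σ t x) := by ring
            rw [heq]
            refine (abs_add_le _ _).trans ?_
            rw [abs_neg]
        _ = (∫ x, |ρ u x - ρ t x| ∂ν) + ∫ x, |σ u x - σ t x| ∂ν := by
            rw [integral_add hint1 hint2]
    have : Tendsto F (𝓝[Set.Icc (0:ℝ) T \ {t}] t) (𝓝 (F t)) := by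
      have h3 := hFt.add_const (F t)
      simpa using h3
    exact this
  -- key slope estimate from the left
  have hslope : ∀ t ∈ Set.Ioo (0:ℝ) T, ∀ r : ℝ, 0 < r →
      ∀ᶠ k in 𝓝[>] (0:ℝ), (F t - F (t - k)) / k < r := by
    intro t ht r hr
    have htI : t ∈ Set.Icc (0:ℝ) T := ⟨ht.1.le, ht.2.le⟩
    have hai : Integrable (fun x => σ t x - ρ t x) ν := hwi t htI
    have hbi : Integrable (fun x => σ' t x - ρ' t x) ν := (hσ'i t htI).sub (hρ'i t htI)
    set g : X → ℝ := hai.1.mk _ with hgdef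
    have hg : (fun x => σ t x - ρ t x) =ᵐ[ν] g := hai.1.ae_eq_mk
    have hgm : StronglyMeasurable g := hai.1.stronglyMeasurable_mk
    set S : Set X := {x | 0 < g x} with hSdef
    have hS : MeasurableSet S := measurableSet_lt measurable_const hgm.measurable
    have hseq : S =ᵐ[ν] {x | 0 < σ t x - ρ t x} := by
      rw [Filter.eventuallyEq_set]
      filter_upwards [hg] with x hx
      simp only [hSdef, Set.mem_setOf_eq, hx]
    set I : ℝ := ∫ x in S, (σ' t x - ρ' t x) ∂ν with hIdef
    -- I ≤ 0 via linearity and the maximum principles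
    have hKa : ∀ x, K (fun y => σ t y - ρ t y) x = K (σ t) x - K (ρ t) x := by
      intro x
      have h1 : (fun y => σ t y - ρ t y) = σ t + (-1 : ℝ) • ρ t := by
        funext y; simp [sub_eq_add_neg]
      rw [h1, hKadd, hKsmul]
      simp [sub_eq_add_neg]
    have hAa : ∀ x, A t (fun y => σ t y - ρ t y) x = A t (σ t) x - A t (ρ t) x := by
      intro x
      have h1 : (fun y => σ t y - ρ t y) = σ t + (-1 : ℝ) • ρ t := by
        funext y; simp [sub_eq_add_neg]
      rw [h1, hAadd, hAsmul]
      simp [sub_eq_add_neg]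
    have hKai : Integrable (K (fun y => σ t y - ρ t y)) ν := (hKmass _ hai).1
    have hAai : Integrable (A t (fun y => σ t y - ρ t y)) ν := (hAmass t htI _ hai).1
    have hI : I ≤ 0 := by
      have hba : (fun x => σ' t x - ρ' t x) ≤ᵐ[ν]
          fun x => K (fun y => σ t y - ρ t y) x + A t (fun y => σ t y - ρ t y) x := by
        filter_upwards [hρineq t ht, hσineq t ht] with x h1 h2
        rw [hKa, hAa]
        linarith
      have h1 : I ≤ ∫ x in S,
          (K (fun y => σ t y - ρ t y) x + A t (fun y => σ t y - ρ t y) x) ∂ν := by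
        exact setIntegral_mono_ae_restrict hbi.integrableOn
          ((hKai.add hAai).integrableOn) (ae_restrict_of_ae hba)
      have h2 : ∫ x in S,
          (K (fun y => σ t y - ρ t y) x + A t (fun y => σ t y - ρ t y) x) ∂ν
          = (∫ x in {x | 0 < σ t x - ρ t x}, K (fun y => σ t y - ρ t y) x ∂ν)
            + ∫ x in {x | 0 < σ t x - ρ t x}, A t (fun y => σ t y - ρ t y) x ∂ν := by
        rw [Measure.restrict_congr_set hseq,
          integral_add hKai.integrableOn hAai.integrableOn]
      have h3 : ∫ x in {x | 0 < σ t x - ρ t x}, K (fun y => σ t y - ρ t y) x ∂ν ≤ 0 :=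
        hKmax _ hai
      have h4 : ∫ x in {x | 0 < σ t x - ρ t x}, A t (fun y => σ t y - ρ t y) x ∂ν ≤ 0 :=
        hAmax t htI _ hai
      calc I ≤ _ := h1
        _ = _ := h2
        _ ≤ 0 := by linarith
    -- the per-k integral inequality
    have hFk : ∀ k ∈ Set.Ioo (0:ℝ) t, F t - F (t - k) ≤ k * I
        + ((∫ x, |σ (t - k) x - σ t x + k * σ' t x| ∂ν)
          + ∫ x, |ρ (t - k) x - ρ t x + k * ρ' t x| ∂ν) := by
      intro k hk
      have htk : t - k ∈ Set.Icc (0:ℝ) T := ⟨by linarith [hk.2], by linarith [ht.2, hk.1]⟩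
      have hσe : Integrable (fun x => σ (t - k) x - σ t x + k * σ' t x) ν :=
        ((hσi _ htk).sub (hσi t htI)).add ((hσ'i t htI).const_mul k)
      have hρe : Integrable (fun x => ρ (t - k) x - ρ t x + k * ρ' t x) ν :=
        ((hρi _ htk).sub (hρi t htI)).add ((hρ'i t htI).const_mul k)
      have hind : Integrable (fun x => k * S.indicator (fun y => σ' t y - ρ' t y) x) ν :=
        (hbi.indicator hS).const_mul k
      have habs : Integrable (fun x => |σ (t - k) x - σ t x + k * σ' t x|
          + |ρ (t - k) x - ρ t x + k * ρ' t x|) ν := hσe.abs.add hρe.abs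
      have hm1 : Integrable (fun x => max (σ (t - k) x - ρ (t - k) x) 0
          + k * S.indicator (fun y => σ' t y - ρ' t y) x) ν := (hmi _ htk).add hind
      have hRi : Integrable (fun x => max (σ (t - k) x - ρ (t - k) x) 0
          + k * S.indicator (fun y => σ' t y - ρ' t y) x
          + (|σ (t - k) x - σ t x + k * σ' t x| + |ρ (t - k) x - ρ t x + k * ρ' t x|)) ν :=
        hm1.add habs
      have hpt : ∀ᵐ x ∂ν, max (σ t x - ρ t x) 0
          ≤ max (σ (t - k) x - ρ (t - k) x) 0
            + k * S.indicator (fun y => σ' t y - ρ' t y) x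
            + (|σ (t - k) x - σ t x + k * σ' t x| + |ρ (t - k) x - ρ t x + k * ρ' t x|) := by
        filter_upwards [hg] with x hx
        by_cases hpos : 0 < σ t x - ρ t x
        · have hxS : x ∈ S := by
            simp only [hSdef, Set.mem_setOf_eq, ← hx]; exact hpos
          rw [Set.indicator_of_mem hxS]
          have h5 : (ρ (t - k) x - ρ t x + k * ρ' t x) - (σ (t - k) x - σ t x + k * σ' t x)
              ≤ |σ (t - k) x - σ t x + k * σ' t x| + |ρ (t - k) x - ρ t x + k * ρ' t x| := by
            have := le_abs_self (ρ (t - k) x - ρ t x + k * ρ' t x)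
            have := neg_abs_le (σ (t - k) x - σ t x + k * σ' t x)
            linarith
          have h6 := le_max_left (σ (t - k) x - ρ (t - k) x) 0
          have h7 : max (σ t x - ρ t x) 0 = σ t x - ρ t x := max_eq_left hpos.le
          rw [h7]
          nlinarith [h5, h6]
        · have hxS : x ∉ S := by
            simp only [hSdef, Set.mem_setOf_eq, ← hx]; exact hpos
          rw [Set.indicator_of_notMem hxS]
          have h7 : max (σ t x - ρ t x) 0 = 0 := max_eq_right (not_lt.1 hpos)
          rw [h7]
          have h8 := le_max_right (σ (t - k) x - ρ (t - k) x) 0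
          have h9 := abs_nonneg (σ (t - k) x - σ t x + k * σ' t x)
          have h10 := abs_nonneg (ρ (t - k) x - ρ t x + k * ρ' t x)
          linarith
      have hmono := integral_mono_ae (hmi t htI) hRi hpt
      have hsplit : ∫ x, (max (σ (t - k) x - ρ (t - k) x) 0
          + k * S.indicator (fun y => σ' t y - ρ' t y) x
          + (|σ (t - k) x - σ t x + k * σ' t x| + |ρ (t - k) x - ρ t x + k * ρ' t x|)) ∂ν
          = F (t - k) + k * I
            + ((∫ x, |σ (t - k) x - σ t x + k * σ' t x| ∂ν)
              + ∫ x, |ρ (t - k) x - ρ t x + k * ρ' t x| ∂ν) := by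
        rw [integral_add hm1 habs, integral_add (hmi _ htk) hind,
          integral_add hσe.abs hρe.abs, integral_const_mul,
          integral_indicator hS]
      rw [hsplit] at hmono
      linarith
    -- error term tendsto
    have hmapneg : Tendsto (fun k : ℝ => -k) (𝓝[>] (0:ℝ)) (𝓝[≠] (0:ℝ)) := by
      rw [tendsto_nhdsWithin_iff]
      constructor
      · exact (continuous_neg.tendsto' (0:ℝ) 0 neg_zero).mono_left nhdsWithin_le_nhds
      · filter_upwards [self_mem_nhdsWithin] with k hk
        exact neg_ne_zero.2 (ne_of_gt hk)
    have herrσ : Tendsto (fun k : ℝ => (∫ x, |σ (t - k) x - σ t x + k * σ' t x| ∂ν) / k)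
        (𝓝[>] (0:ℝ)) (𝓝 0) := by
      have h1 := (hσd t htI).comp hmapneg
      apply h1.congr'
      filter_upwards [self_mem_nhdsWithin] with k hk
      have h2 : t + -k = t - k := by ring
      have h3 : |(-k)| = k := by rw [abs_neg, abs_of_pos hk]
      simp only [Function.comp, h2, h3]
      congr 1
      apply integral_congr_ae
      filter_upwards with x
      congr 1
      ring
    have herrρ : Tendsto (fun k : ℝ => (∫ x, |ρ (t - k) x - ρ t x + k * ρ' t x| ∂ν) / k)
        (𝓝[>] (0:ℝ)) (𝓝 0) := by
      have h1 := (hρd t htI).comp hmapneg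
      apply h1.congr'
      filter_upwards [self_mem_nhdsWithin] with k hk
      have h2 : t + -k = t - k := by ring
      have h3 : |(-k)| = k := by rw [abs_neg, abs_of_pos hk]
      simp only [Function.comp, h2, h3]
      congr 1
      apply integral_congr_ae
      filter_upwards with x
      congr 1
      ring
    have herr : Tendsto (fun k : ℝ => ((∫ x, |σ (t - k) x - σ t x + k * σ' t x| ∂ν)
        + ∫ x, |ρ (t - k) x - ρ t x + k * ρ' t x| ∂ν) / k) (𝓝[>] (0:ℝ)) (𝓝 0) := by
      have := herrσ.add herrρ
      rw [add_zero] at this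
      apply this.congr
      intro k
      rw [add_div]
    -- combine
    have hev1 : ∀ᶠ k in 𝓝[>] (0:ℝ), k ∈ Set.Ioo (0:ℝ) t :=
      Ioo_mem_nhdsGT_of_mem ⟨le_rfl, ht.1⟩
    have hev2 : ∀ᶠ k in 𝓝[>] (0:ℝ), ((∫ x, |σ (t - k) x - σ t x + k * σ' t x| ∂ν)
        + ∫ x, |ρ (t - k) x - ρ t x + k * ρ' t x| ∂ν) / k < r :=
      herr.eventually (Filter.Tendsto.eventually_lt_const hr tendsto_id) |>.mono (fun k hk => hk)
    filter_upwards [hev1, hev2] with k hk hkr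
    have h1 := hFk k hk
    have hkpos : 0 < k := hk.1
    have h2 : (F t - F (t - k)) / k ≤ (k * I
        + ((∫ x, |σ (t - k) x - σ t x + k * σ' t x| ∂ν)
          + ∫ x, |ρ (t - k) x - ρ t x + k * ρ' t x| ∂ν)) / k :=
      (div_le_div_iff_of_pos_right hkpos).2 h1
    have h3 : (k * I + ((∫ x, |σ (t - k) x - σ t x + k * σ' t x| ∂ν)
        + ∫ x, |ρ (t - k) x - ρ t x + k * ρ' t x| ∂ν)) / k
        = I + ((∫ x, |σ (t - k) x - σ t x + k * σ' t x| ∂ν)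
          + ∫ x, |ρ (t - k) x - ρ t x + k * ρ' t x| ∂ν) / k := by
      rw [add_div, mul_div_cancel_left₀ _ (ne_of_gt hkpos)]
    calc (F t - F (t - k)) / k ≤ _ := h2
      _ = _ := h3
      _ < 0 + r := by exact add_lt_add_of_le_of_lt hI hkr
      _ = r := zero_add r
  -- F ≤ 0 on the open interval via the fencing theorem
  have hIoo : ∀ t₀ ∈ Set.Ioo (0:ℝ) T, F t₀ ≤ 0 := by
    intro t₀ ht₀
    set G : ℝ → ℝ := fun s => -F (-s) with hGdef
    have hsub : Set.Icc (0:ℝ) t₀ ⊆ Set.Icc (0:ℝ) T :=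
      Set.Icc_subset_Icc le_rfl ht₀.2.le
    have hGcont : ContinuousOn G (Set.Icc (-t₀) 0) := by
      apply ContinuousOn.neg
      apply ContinuousOn.comp (hFcont.mono hsub) (continuous_neg.continuousOn)
      intro s hs
      rw [Set.mem_Icc] at hs
      show -s ∈ Set.Icc (0:ℝ) t₀
      rw [Set.mem_Icc]
      exact ⟨by linarith [hs.2], by linarith [hs.1]⟩
    have hbound : ∀ s ∈ Set.Ico (-t₀) 0, ∀ r : ℝ, (0:ℝ) < r →
        ∃ᶠ z in 𝓝[>] s, slope G s z < r := by
      intro s hs r hr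
      rw [Set.mem_Ico] at hs
      have hts : -s ∈ Set.Ioo (0:ℝ) T :=
        ⟨by linarith [hs.2], by linarith [hs.1, ht₀.2]⟩
      have h := hslope (-s) hts r hr
      rw [Filter.Eventually, mem_nhdsGT_iff_exists_Ioo_subset] at h
      obtain ⟨u, hu, hsubset⟩ := h
      apply Filter.Eventually.frequently
      rw [Filter.Eventually, mem_nhdsGT_iff_exists_Ioo_subset]
      refine ⟨s + u, by simpa using hu, ?_⟩
      intro z hz
      have hk : z - s ∈ Set.Ioo (0:ℝ) u := ⟨by linarith [hz.1], by linarith [hz.2]⟩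
      have h1 := hsubset hk
      simp only [Set.mem_setOf_eq] at h1
      show slope G s z < r
      rw [slope_def_field]
      have h2 : G z - G s = F (-s) - F (-s - (z - s)) := by
        simp only [hGdef]
        have : -s - (z - s) = -z := by ring
        rw [this]
        ring
      rw [h2]
      exact h1
    have hkey := image_le_of_liminf_slope_right_le_deriv_boundary
      (f := G) (a := -t₀) (b := 0) hGcont
      (B := fun _ => -F t₀) (B' := fun _ => 0)
      (by simp [hGdef]) continuousOn_const
      (fun x _ => hasDerivWithinAt_const x _ _) hbound
    have h0mem : (0:ℝ) ∈ Set.Icc (-t₀) 0 := ⟨by linarith [ht₀.1], le_rfl⟩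
    have := hkey h0mem
    simp only [hGdef, neg_zero, hF0] at this
    linarith [this]
  -- F ≤ 0 on all of [0, T]
  have hFle : ∀ t ∈ Set.Icc (0:ℝ) T, F t ≤ 0 := by
    intro t ht
    rcases eq_or_lt_of_le ht.1 with h0 | h0
    · rw [← h0]; exact le_of_eq hF0
    rcases eq_or_lt_of_le ht.2 with hTe | hTl
    · subst hTe
      have hfil : 𝓝[Set.Ioo (0:ℝ) t] t = 𝓝[<] t := by
        have h1 : Set.Ioo (0:ℝ) t ∈ 𝓝[<] t := Ioo_mem_nhdsLT_of_mem ⟨h0, le_rfl⟩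
        have h2 := nhdsWithin_inter_of_mem (t := Set.Iio t) (a := t) h1
        rwa [Set.inter_eq_left.2 (fun x hx => hx.2)] at h2
      have hne : (𝓝[Set.Ioo (0:ℝ) t] t).NeBot := by rw [hfil]; infer_instance
      have htd : Tendsto F (𝓝[Set.Ioo (0:ℝ) t] t) (𝓝 (F t)) :=
        (hFcont t ht).mono Set.Ioo_subset_Icc_self
      refine le_of_tendsto htd ?_
      filter_upwards [self_mem_nhdsWithin] with u hu
      exact hIoo u hu
    · exact hIoo t ⟨h0, hTl⟩
  -- conclusion
  intro t ht
  have hFt : F t = 0 := le_antisymm (hFle t ht) (hFnonneg t)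
  have h0 : (fun x => max (σ t x - ρ t x) 0) =ᵐ[ν] 0 :=
    (integral_eq_zero_iff_of_nonneg (fun x => le_max_right _ _) (hmi t ht)).1 hFt
  filter_upwards [h0] with x hx
  have h1 : σ t x - ρ t x ≤ max (σ t x - ρ t x) 0 := le_max_left _ _
  have h2 : max (σ t x - ρ t x) 0 = 0 := hx
  linarith
end
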